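/- Let Φ_γ : ℝᵖ → ℝ be differentiable with L_{Φ_γ}-Lipschitz gradient and ℛ : ℝᵖ → ℝ∪{+∞} proper, closed, convex. Fix x̄ ∈ ℝᵖ, η > 0, and an arbitrary vector g ∈ ℝᵖ (an approximation ∇̃Φ_γ(x̄) of ∇Φ_γ(x̄)), and set x̃*_γ := prox_{ηℛ}(x̄ − ηg). Then dist(0, ∇Φ_γ(x̃*_γ) + ∂ℛ(x̃*_γ)) ≤ (1 + ηL_{Φ_γ})‖G_η(x̄)‖ + (2 + ηL_{Φ_γ})‖∇Φ_γ(x̄) − g‖, where ∂ℛ denotes the convex subdifferential, dist(z, S) := inf_{s∈S}‖z − s‖, and G_η(x̄) := (x̄ − prox_{ηℛ}(x̄ − η∇Φ_γ(x̄)))/η. -/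

import Mathlib

open scoped RealInnerProductSpace

/-- The convex subdifferential `∂R(x) := {w : R(y) ≥ R(x) + ⟨w, y − x⟩ for all y}`. -/
def subdiff {p : ℕ} (R : EuclideanSpace ℝ (Fin p) → ℝ) (x : EuclideanSpace ℝ (Fin p)) :
    Set (EuclideanSpace ℝ (Fin p)) :=
  {w | ∀ y, R x + ⟪w, y - x⟫ ≤ R y}

/-!
The optimality condition of the proximal problem says that `η⁻¹ • (z - prox z)` is a
subgradient of `ℛ` at `prox z`; hence `∇Φ(x̃) + η⁻¹ • (x̄ - η • g - x̃)` lies in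
`∇Φ(x̃) + ∂ℛ(x̃)`. Splitting it as `(∇Φ(x̃) - ∇Φ(x̄)) + (∇Φ(x̄) - g) + η⁻¹ • (x̄ - x̃)`, the first
term is controlled by the Lipschitz bound and the step `x̃ - x̄`, and the step
`η⁻¹ • (x̄ - x̃)` differs from the exact gradient mapping `G_η(x̄)` by at most `‖∇Φ(x̄) - g‖`,
because the proximal map is nonexpansive.
-/

open Set Filter Topology

section Prox

variable {E : Type*} [NormedAddCommGroup E] [InnerProductSpace ℝ E] {R : E → ℝ} {η : ℝ}

theorem ConvexOn.le_add_inner_of_isMinOn_prox (hR : ConvexOn ℝ univ R) (hη : 0 < η) {z m : E}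
    (hm : IsMinOn (fun y => R y + ‖y - z‖ ^ 2 / (2 * η)) univ m) (y : E) :
    R m + ⟪η⁻¹ • (z - m), y - m⟫ ≤ R y := by
  set u := m - z
  set d := y - m
  -- compare `m` with the points `m + t • d` of the segment towards `y`, then let `t → 0⁺`
  have hsegment : ∀ t ∈ Ioc (0 : ℝ) 1, R m - R y - ⟪u, d⟫ / η ≤ t * (‖d‖ ^ 2 / (2 * η)) := by
    rintro t ⟨ht0, ht1⟩
    have hmin : R m + ‖u‖ ^ 2 / (2 * η) ≤ R (m + t • d) + ‖u + t • d‖ ^ 2 / (2 * η) := by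
      simpa only [add_sub_right_comm] using isMinOn_univ_iff.1 hm (m + t • d)
    have hconv : R (m + t • d) ≤ (1 - t) * R m + t * R y := by
      have h := hR.2 (mem_univ m) (mem_univ y) (sub_nonneg.2 ht1) ht0.le (sub_add_cancel 1 t)
      rwa [show (1 - t) • m + t • y = m + t • d by module, smul_eq_mul, smul_eq_mul] at h
    have hexpand : ‖u + t • d‖ ^ 2 / (2 * η)
        = ‖u‖ ^ 2 / (2 * η) + t * (⟪u, d⟫ / η) + t * (t * (‖d‖ ^ 2 / (2 * η))) := by
      rw [norm_add_sq_real, real_inner_smul_right, norm_smul, Real.norm_of_nonneg ht0.le]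
      field_simp
    refine le_of_mul_le_mul_left ?_ ht0
    linarith
  have hlimit : Tendsto (fun t : ℝ => t * (‖d‖ ^ 2 / (2 * η))) (𝓝[>] 0) (𝓝 0) :=
    tendsto_nhdsWithin_of_tendsto_nhds <|
      (by fun_prop : Continuous fun t : ℝ => t * (‖d‖ ^ 2 / (2 * η))).tendsto' 0 0 (zero_mul _)
  have hle := ge_of_tendsto hlimit (eventually_of_mem (Ioc_mem_nhdsGT one_pos) hsegment)
  have hinner : ⟪η⁻¹ • (z - m), d⟫ = -(⟪u, d⟫ / η) := by
    rw [real_inner_smul_left, ← neg_sub, inner_neg_left]; ring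
  rw [hinner]
  linarith

theorem ConvexOn.norm_sub_sq_le_inner_of_isMinOn_prox (hR : ConvexOn ℝ univ R) (hη : 0 < η)
    {z₁ z₂ m₁ m₂ : E} (hm₁ : IsMinOn (fun y => R y + ‖y - z₁‖ ^ 2 / (2 * η)) univ m₁)
    (hm₂ : IsMinOn (fun y => R y + ‖y - z₂‖ ^ 2 / (2 * η)) univ m₂) :
    ‖m₁ - m₂‖ ^ 2 ≤ ⟪z₁ - z₂, m₁ - m₂⟫ := by
  have h₁ := hR.le_add_inner_of_isMinOn_prox hη hm₁ m₂
  have h₂ := hR.le_add_inner_of_isMinOn_prox hη hm₂ m₁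
  have hsum : ⟪η⁻¹ • (z₁ - m₁), m₂ - m₁⟫ + ⟪η⁻¹ • (z₂ - m₂), m₁ - m₂⟫
      = η⁻¹ * (‖m₁ - m₂‖ ^ 2 - ⟪z₁ - z₂, m₁ - m₂⟫) := by
    rw [← real_inner_self_eq_norm_sq]
    simp only [real_inner_smul_left, inner_sub_left, inner_sub_right]
    ring
  exact sub_nonpos.1 (nonpos_of_mul_nonpos_right (by linarith) (inv_pos.2 hη))

theorem ConvexOn.norm_sub_le_of_isMinOn_prox (hR : ConvexOn ℝ univ R) (hη : 0 < η)
    {z₁ z₂ m₁ m₂ : E} (hm₁ : IsMinOn (fun y => R y + ‖y - z₁‖ ^ 2 / (2 * η)) univ m₁)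
    (hm₂ : IsMinOn (fun y => R y + ‖y - z₂‖ ^ 2 / (2 * η)) univ m₂) :
    ‖m₁ - m₂‖ ≤ ‖z₁ - z₂‖ := by
  have h := (hR.norm_sub_sq_le_inner_of_isMinOn_prox hη hm₁ hm₂).trans (real_inner_le_norm _ _)
  nlinarith [norm_nonneg (m₁ - m₂), norm_nonneg (z₁ - z₂)]

theorem ConvexOn.norm_inv_smul_sub_le_of_isMinOn_prox (hR : ConvexOn ℝ univ R) (hη : 0 < η)
    {x g g' m m' : E} (hm : IsMinOn (fun y => R y + ‖y - (x - η • g)‖ ^ 2 / (2 * η)) univ m)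
    (hm' : IsMinOn (fun y => R y + ‖y - (x - η • g')‖ ^ 2 / (2 * η)) univ m') :
    ‖η⁻¹ • (x - m)‖ ≤ ‖η⁻¹ • (x - m')‖ + ‖g' - g‖ := by
  have hprox : ‖m' - m‖ ≤ η * ‖g' - g‖ := by
    have h := hR.norm_sub_le_of_isMinOn_prox hη hm' hm
    rw [sub_sub_sub_cancel_left, ← smul_sub, norm_smul, Real.norm_of_nonneg hη.le] at h
    rwa [norm_sub_rev g']
  calc ‖η⁻¹ • (x - m)‖ = ‖η⁻¹ • (x - m') + η⁻¹ • (m' - m)‖ := by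
        rw [← smul_add, sub_add_sub_cancel]
    _ ≤ ‖η⁻¹ • (x - m')‖ + ‖η⁻¹ • (m' - m)‖ := norm_add_le _ _
    _ ≤ ‖η⁻¹ • (x - m')‖ + ‖g' - g‖ := by
        gcongr
        rwa [norm_smul, Real.norm_of_nonneg (inv_nonneg.2 hη.le), inv_mul_le_iff₀ hη]

end Prox

theorem stmt_16_general {p : ℕ}
    -- Φ_γ differentiable with L_{Φ_γ}-Lipschitz gradient
    (gΦ : EuclideanSpace ℝ (Fin p) → EuclideanSpace ℝ (Fin p))
    (LΦ : ℝ) (hLΦ_pos : 0 < LΦ)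
    (hLip : ∀ x x', ‖gΦ x - gΦ x'‖ ≤ LΦ * ‖x - x'‖)
    -- ℛ proper, closed, convex, with its proximal operator
    (ℛ : EuclideanSpace ℝ (Fin p) → ℝ)
    (hℛ_convex : ConvexOn ℝ Set.univ ℛ)
    (prox : ℝ → EuclideanSpace ℝ (Fin p) → EuclideanSpace ℝ (Fin p))
    (hprox : ∀ η : ℝ, 0 < η → ∀ z,
      IsMinOn (fun y => ℛ y + ‖y - z‖ ^ 2 / (2 * η)) Set.univ (prox η z))
    -- data of the statement
    (xbar : EuclideanSpace ℝ (Fin p)) (η : ℝ) (hη : 0 < η)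
    (g : EuclideanSpace ℝ (Fin p)) :
    Metric.infDist 0
        ((fun w => gΦ (prox η (xbar - η • g)) + w) '' subdiff ℛ (prox η (xbar - η • g))) ≤
      (1 + η * LΦ) * ‖η⁻¹ • (xbar - prox η (xbar - η • gΦ xbar))‖
        + (2 + η * LΦ) * ‖gΦ xbar - g‖ := by
  set x := prox η (xbar - η • g)
  set G := η⁻¹ • (xbar - prox η (xbar - η • gΦ xbar))
  have hsubgrad : η⁻¹ • (xbar - η • g - x) ∈ subdiff ℛ x :=
    hℛ_convex.le_add_inner_of_isMinOn_prox hη (hprox η hη _)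
  have hresidual : ‖η⁻¹ • (xbar - x)‖ ≤ ‖G‖ + ‖gΦ xbar - g‖ :=
    hℛ_convex.norm_inv_smul_sub_le_of_isMinOn_prox hη (hprox η hη _) (hprox η hη _)
  have hstep : ‖x - xbar‖ = η * ‖η⁻¹ • (xbar - x)‖ := by
    rw [norm_smul, Real.norm_of_nonneg (inv_nonneg.2 hη.le), mul_inv_cancel_left₀ hη.ne',
      norm_sub_rev]
  calc Metric.infDist 0 ((fun w => gΦ x + w) '' subdiff ℛ x)
      ≤ ‖gΦ x + η⁻¹ • (xbar - η • g - x)‖ :=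
        (Metric.infDist_le_dist_of_mem (mem_image_of_mem _ hsubgrad)).trans_eq (dist_zero_left _)
    _ = ‖(gΦ x - gΦ xbar) + (gΦ xbar - g) + η⁻¹ • (xbar - x)‖ := by
        rw [sub_right_comm, smul_sub, smul_smul, inv_mul_cancel₀ hη.ne', one_smul]
        congr 1
        abel
    _ ≤ LΦ * ‖x - xbar‖ + ‖gΦ xbar - g‖ + ‖η⁻¹ • (xbar - x)‖ :=
        norm_add₃_le.trans (by grw [hLip x xbar])
    _ = (1 + η * LΦ) * ‖η⁻¹ • (xbar - x)‖ + ‖gΦ xbar - g‖ := by rw [hstep]; ring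
    _ ≤ (1 + η * LΦ) * (‖G‖ + ‖gΦ xbar - g‖) + ‖gΦ xbar - g‖ := by
        gcongr
    _ = (1 + η * LΦ) * ‖G‖ + (2 + η * LΦ) * ‖gΦ xbar - g‖ := by ring

/-- For `Φ_γ` differentiable with `L_{Φ_γ}`-Lipschitz gradient, `ℛ` proper,
closed, convex, `x̄ ∈ ℝᵖ`, `η > 0`, an arbitrary vector `g` (approximating `∇Φ_γ(x̄)`), and
`x̃*_γ := prox_{ηℛ}(x̄ − ηg)`:
`dist(0, ∇Φ_γ(x̃*_γ) + ∂ℛ(x̃*_γ)) ≤ (1 + ηL)‖G_η(x̄)‖ + (2 + ηL)‖∇Φ_γ(x̄) − g‖`. -/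
theorem stmt_16 {p : ℕ}
    -- Φ_γ differentiable with L_{Φ_γ}-Lipschitz gradient
    (Φγ : EuclideanSpace ℝ (Fin p) → ℝ)
    (gΦ : EuclideanSpace ℝ (Fin p) → EuclideanSpace ℝ (Fin p))
    (hΦ_diff : ∀ x, HasGradientAt Φγ (gΦ x) x)
    (LΦ : ℝ) (hLΦ_pos : 0 < LΦ)
    (hLip : ∀ x x', ‖gΦ x - gΦ x'‖ ≤ LΦ * ‖x - x'‖)
    -- ℛ proper, closed, convex, with its proximal operator
    (ℛ : EuclideanSpace ℝ (Fin p) → ℝ)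
    (hℛ_convex : ConvexOn ℝ Set.univ ℛ)
    (hℛ_lsc : LowerSemicontinuous ℛ)
    (prox : ℝ → EuclideanSpace ℝ (Fin p) → EuclideanSpace ℝ (Fin p))
    (hprox : ∀ η : ℝ, 0 < η → ∀ z,
      IsMinOn (fun y => ℛ y + ‖y - z‖ ^ 2 / (2 * η)) Set.univ (prox η z))
    -- data of the statement
    (xbar : EuclideanSpace ℝ (Fin p)) (η : ℝ) (hη : 0 < η)
    (g : EuclideanSpace ℝ (Fin p)) :
    Metric.infDist 0
        ((fun w => gΦ (prox η (xbar - η • g)) + w) '' subdiff ℛ (prox η (xbar - η • g))) ≤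
      (1 + η * LΦ) * ‖η⁻¹ • (xbar - prox η (xbar - η • gΦ xbar))‖
        + (2 + η * LΦ) * ‖gΦ xbar - g‖ :=
  stmt_16_general gΦ LΦ hLΦ_pos hLip ℛ hℛ_convex prox hprox xbar η hη g
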